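/- Non-collapsing is preserved under renaming the indeterminate: if t is a closed term over Σ₁ ∪ Σ₂ ∪ Σ₃ ∪ {x} such that t^𝒜 = [t]_≅ and u^𝒜 = [u]_≅ for every alien subterm u of t at arbitrary depth, then for every i ≥ 1 the term t(xᵢ) := t[xᵢ/x] also satisfies t(xᵢ)^𝒜 = [t(xᵢ)]_≅, and v^𝒜 = [v]_≅ for every alien subterm v of t(xᵢ) at arbitrary depth. -/

import Mathlib

/-- First-order terms over symbols `S` with arity `ar` and variables `V`. -/
inductive Tm (S : Type) (ar : S → ℕ) (V : Type) : Type
  | var : V → Tm S ar V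
  | app : (f : S) → (Fin (ar f) → Tm S ar V) → Tm S ar V

namespace Tm
variable {S : Type} {ar : S → ℕ} {V W : Type}

def mapVar (g : V → W) : Tm S ar V → Tm S ar W
  | var v => var (g v)
  | app f ts => app f (fun i => (ts i).mapVar g)

def bind : Tm S ar V → (V → Tm S ar W) → Tm S ar W
  | var v, g => g v
  | app f ts, g => app f (fun i => (ts i).bind g)

/-- All variables of a term belong to a given set. -/
def VarsIn : Tm S ar V → Set V → Prop
  | var v, A => v ∈ A
  | app _ ts, A => ∀ i, VarsIn (ts i) A

/-- The term contains at least one variable. -/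
def HasVar : Tm S ar V → Prop
  | var _ => True
  | app _ ts => ∃ i, HasVar (ts i)

end Tm

/-- The combined signature: operation symbols of the two theories (`op`),
generator constants `y₁,…,yₙ` (`gen`), and indeterminate constants `x = ind 0`,
`xᵢ = ind i` (`ind`). -/
inductive CSym (F : Bool → Type) (n : ℕ) : Type
  | op : (b : Bool) → F b → CSym F n
  | gen : Fin n → CSym F n
  | ind : ℕ → CSym F n

namespace CSym
variable {F : Bool → Type} {n : ℕ}

def arity (arF : ∀ b, F b → ℕ) : CSym F n → ℕ
  | op b f => arF b f
  | gen _ => 0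
  | ind _ => 0

/-- Which of the four component signatures a symbol belongs to:
`0 = Σ₁`, `1 = Σ₂`, `2 = Σ₃`, `3 = Σ₄`. -/
def sig : CSym F n → Fin 4
  | op false _ => 0
  | op true _ => 1
  | gen _ => 2
  | ind _ => 3

end CSym
section Setup

variable (F : Bool → Type) (arF : ∀ b, F b → ℕ) (n : ℕ)

/-- Closed terms over the combined signature `Σ = Σ₁ ∪ Σ₂ ∪ Σ₃ ∪ Σ₄`. -/
abbrev CT := Tm (CSym F n) (CSym.arity arF) Empty

/-- The root symbol of a closed term. -/
def rootSym : CT F arF n → CSym F n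
  | .var v => v.elim
  | .app f _ => f

/-- All symbols of the closed term satisfy the predicate `P`. -/
def InSig (P : CSym F n → Prop) : CT F arF n → Prop
  | .var v => v.elim
  | .app f ts => P f ∧ ∀ i, InSig P (ts i)

/-- A closed term is pure if all of its symbols belong to a single one of the
four component signatures. -/
def IsPure (t : CT F arF n) : Prop := ∃ k : Fin 4, InSig F arF n (fun s => s.sig = k) t

/-- The rank of a closed term: `0` if pure, and otherwise `1` plus the maximal
rank of its alien subterms. -/
def rank : CT F arF n → ℕ
  | .var v => v.elim
  | .app f ts =>
      Finset.univ.sup fun i =>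
        rank (ts i) + (if (rootSym F arF n (ts i)).sig = f.sig then 0 else 1)

/-- The maximal subterms of `t` whose root is outside signature `k`. -/
def aliensUnder (k : Fin 4) : CT F arF n → Set (CT F arF n)
  | .var v => v.elim
  | .app f ts =>
      if f.sig = k then ⋃ i, aliensUnder k (ts i) else {Tm.app f ts}

/-- The alien subterms of a closed term (relative to the signature of its root). -/
def aliensSet : CT F arF n → Set (CT F arF n)
  | .var v => v.elim
  | .app f ts => ⋃ i, aliensUnder F arF n f.sig (ts i)

/-- All alien subterms at arbitrary depth. -/
def allAliensSet : CT F arF n → Set (CT F arF n)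
  | .var v => v.elim
  | .app f ts =>
      ⋃ i, (if (rootSym F arF n (ts i)).sig = f.sig then (∅ : Set _) else {ts i}) ∪
        allAliensSet (ts i)

/-- View a closed combined term through the layer of theory `b`: keep the
top part built from `Σ_b`-symbols and regard the maximal non-`Σ_b`-rooted
subterms as opaque constants. -/
def layerize (b : Bool) : CT F arF n → Tm (F b) (arF b) (CT F arF n)
  | .app (.op b' f) ts =>
      if h : b' = b then h ▸ (Tm.app f (fun i => layerize b' (ts i)))
      else Tm.var (Tm.app (.op b' f) ts)
  | t => Tm.var t

end Setup
section Setup2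

variable (F : Bool → Type) (arF : ∀ b, F b → ℕ) (n : ℕ)
variable (Ax : ∀ b, Set (Tm (F b) (arF b) ℕ × Tm (F b) (arF b) ℕ))

mutual
/-- The isomorphism relation `≅` on closed combined terms, defined together
with the layer congruences: two terms are isomorphic iff their roots lie in the
same component signature and their alien abstractions are congruent modulo the
corresponding theory (for the constant signatures `Σ₃, Σ₄` this is syntactic
equality). -/
inductive Iso : CT F arF n → CT F arF n → Prop where
  | opEq (b : Bool) (u v : CT F arF n) :
      (∃ g : F b, rootSym F arF n u = .op b g) →
      (∃ g : F b, rootSym F arF n v = .op b g) →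
      LEq b (layerize F arF n b u) (layerize F arF n b v) → Iso u v
  | constEq (t : CT F arF n) :
      ((rootSym F arF n t).sig = 2 ∨ (rootSym F arF n t).sig = 3) → Iso t t

/-- The congruence `≈_b` on `Σ_b`-terms whose constants are closed combined
terms (representing their `≅`-classes): generated by the substitution instances
of the axioms of `𝕋_b` together with the identification of `≅`-related
constants. -/
inductive LEq : (b : Bool) →
    Tm (F b) (arF b) (CT F arF n) → Tm (F b) (arF b) (CT F arF n) → Prop where
  | refl (b) (t) : LEq b t t
  | symm {b s t} : LEq b s t → LEq b t s
  | trans {b s t u} : LEq b s t → LEq b t u → LEq b s u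
  | congr (b) (g : F b) (ts us : Fin (arF b g) → Tm (F b) (arF b) (CT F arF n)) :
      (∀ i, LEq b (ts i) (us i)) → LEq b (.app g ts) (.app g us)
  | varRel (b) (s t : CT F arF n) : Iso s t → LEq b (.var s) (.var t)
  | ax (b) (u v : Tm (F b) (arF b) ℕ) : (u, v) ∈ Ax b →
      ∀ σ : ℕ → Tm (F b) (arF b) (CT F arF n), LEq b (u.bind σ) (v.bind σ)
end

end Setup2
section Setup3

variable (F : Bool → Type) (arF : ∀ b, F b → ℕ) (n : ℕ)
variable (Ax : ∀ b, Set (Tm (F b) (arF b) ℕ × Tm (F b) (arF b) ℕ))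

/-- The combined algebra `𝒜 = Term^c(Σ)/≅`. -/
abbrev Alg := Quot (Iso F arF n Ax)

/-- Provable equality in the theory `𝕋_b` on terms with variables (equivalently
the smallest `Σ_b`-congruence containing all substitution instances of the
axioms of `𝕋_b`); with `V := Alg` this is the congruence `≈_b` on
`Term^c(Σ_b, Term^c(Σ)/≅)`. -/
inductive AxCong (b : Bool) {V : Type} : Tm (F b) (arF b) V → Tm (F b) (arF b) V → Prop where
  | refl (t) : AxCong b t t
  | symm {s t} : AxCong b s t → AxCong b t s
  | trans {s t u} : AxCong b s t → AxCong b t u → AxCong b s u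
  | congr (g : F b) (ts us : Fin (arF b g) → Tm (F b) (arF b) V) :
      (∀ i, AxCong b (ts i) (us i)) → AxCong b (.app g ts) (.app g us)
  | ax (u v : Tm (F b) (arF b) ℕ) : (u, v) ∈ Ax b →
      ∀ σ : ℕ → Tm (F b) (arF b) V, AxCong b (u.bind σ) (v.bind σ)

/-- Abstraction of alien subterms: `[t]ᵇ_≅ ∈ Term^c(Σ_b, Term^c(Σ)/≅)`. -/
def absQ (b : Bool) (t : CT F arF n) : Tm (F b) (arF b) (Alg F arF n Ax) :=
  (layerize F arF n b t).mapVar (Quot.mk _)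

attribute [local instance] Classical.propDecidable

/-- The interpretation `t^𝒜` of a closed combined term in the combined algebra:
a term collapses to (the class of) an alien subterm whose class its alien
abstraction is `≈_b`-congruent to, and is interpreted by its own class
otherwise. -/
noncomputable def interp : CT F arF n → Alg F arF n Ax
  | .app (.op b g) ts =>
      let t' : CT F arF n := .app (.op b g) (fun i => (interp (ts i)).out)
      if h : ∃ u, u ∈ aliensSet F arF n t' ∧
          AxCong F arF Ax b (absQ F arF n Ax b t') (.var (Quot.mk _ u))
      then Quot.mk _ h.choose
      else Quot.mk _ t'
  | t => Quot.mk _ t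

end Setup3
section Setup4

variable (F : Bool → Type) (arF : ∀ b, F b → ℕ) (n : ℕ)
variable (Ax : ∀ b, Set (Tm (F b) (arF b) ℕ × Tm (F b) (arF b) ℕ))

/-- Substitution of a closed term `w` for the indeterminate constant `x_j` in a
closed combined term. -/
def substInd (j : ℕ) (w : CT F arF n) : CT F arF n → CT F arF n
  | .var v => v.elim
  | .app (.ind j') ts => if j' = j then w else .app (.ind j') ts
  | .app f ts => .app f (fun i => substInd j w (ts i))

/-- The indeterminate constant `x_i` as a closed term (`x = xTm 0`). -/
def xTm (i : ℕ) : CT F arF n := .app (.ind i) Fin.elim0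

/-- Replace every indeterminate constant occurring in a term by `x`. -/
def indToX : CT F arF n → CT F arF n
  | .var v => v.elim
  | .app (.ind _) _ => xTm F arF n 0
  | .app f ts => .app f (fun i => indToX (ts i))

/-- Embedding of `Σ_b`-terms into combined terms. -/
def embedOp (b : Bool) {V : Type} : Tm (F b) (arF b) V → Tm (CSym F n) (CSym.arity arF) V
  | .var v => .var v
  | .app g ts => .app (.op b g) (fun i => embedOp b (ts i))

/-- Provable equality for the (combination of the) theories `𝕋_b` (`b ∈ B`) on
closed terms over the sub-signature of symbols satisfying `P`: the smallest
congruence on that set of closed terms containing all substitution instances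
(by closed terms over the sub-signature) of the axioms. -/
inductive PE (B : Set Bool) (P : CSym F n → Prop) : CT F arF n → CT F arF n → Prop where
  | refl (t) : InSig F arF n P t → PE B P t t
  | symm {s t} : PE B P s t → PE B P t s
  | trans {s t u} : PE B P s t → PE B P t u → PE B P s u
  | congr (f : CSym F n) (ts us : Fin (CSym.arity arF f) → CT F arF n) : P f →
      (∀ i, PE B P (ts i) (us i)) → PE B P (.app f ts) (.app f us)
  | ax (b : Bool) (hb : b ∈ B) (u v : Tm (F b) (arF b) ℕ) (h : (u, v) ∈ Ax b)
      (σ : ℕ → CT F arF n) : (∀ m, InSig F arF n P (σ m)) →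
      PE B P ((embedOp F arF n b u).bind σ) ((embedOp F arF n b v).bind σ)

/-- The sub-signature consisting of the operations of the theories in `B`, all
generator constants `y₁,…,yₙ`, and the indeterminates `x_j` with `j ∈ J`. -/
def SigP (B : Set Bool) (J : Set ℕ) : CSym F n → Prop
  | .op b _ => b ∈ B
  | .gen _ => True
  | .ind j => j ∈ J

/-- The (combination of the) theories in `B` is non-trivial: it does not prove
the equation `x = y` for distinct variables (equivalently, it does not identify
two distinct indeterminate constants). -/
def Nontriv (B : Set Bool) : Prop :=
  ¬ PE F arF n Ax B (SigP F n B Set.univ) (xTm F arF n 1) (xTm F arF n 2)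

/-- Membership of (the class of) `t` in the logical isotropy group of the free
model on `n` generators of the combination of the theories in `B`: `t` is a
closed term over the signature extended by the constant `x` that is invertible
under substitution into `x` and commutes generically with every operation. -/
def GIso (B : Set Bool) (t : CT F arF n) : Prop :=
  InSig F arF n (SigP F n B {0}) t ∧
  (∃ tinv, InSig F arF n (SigP F n B {0}) tinv ∧
    PE F arF n Ax B (SigP F n B {0}) (substInd F arF n 0 tinv t) (xTm F arF n 0) ∧
    PE F arF n Ax B (SigP F n B {0}) (substInd F arF n 0 t tinv) (xTm F arF n 0)) ∧
  ∀ b, b ∈ B → ∀ g : F b,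
    PE F arF n Ax B (SigP F n B {j | 1 ≤ j ∧ j ≤ arF b g})
      (substInd F arF n 0 (.app (.op b g) (fun i => xTm F arF n (i.val + 1))) t)
      (.app (.op b g) (fun i => substInd F arF n 0 (xTm F arF n (i.val + 1)) t))

/-- `g` is a projection in `𝕋_b`. -/
def IsProj (b : Bool) (g : F b) : Prop :=
  ∃ i : Fin (arF b g),
    AxCong F arF Ax b (V := ℕ) (.app g (fun j => .var j.val)) (.var i.val)

/-- `g` is constant in `𝕋_b`: `𝕋_b` proves `g(y₁,…,y_m) = s` for pairwise
distinct variables none of which occurs in `s`. -/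
def IsConst (b : Bool) (g : F b) : Prop :=
  ∃ s : Tm (F b) (arF b) ℕ, s.VarsIn {m | arF b g ≤ m} ∧
    AxCong F arF Ax b (V := ℕ) (.app g (fun j => .var j.val)) s

end Setup4
section Models

variable (F : Bool → Type) (arF : ∀ b, F b → ℕ) (n : ℕ)
variable (Ax : ∀ b, Set (Tm (F b) (arF b) ℕ × Tm (F b) (arF b) ℕ))

/-- Evaluation of a `Σ_b`-term in a set equipped with operations. -/
def evalTm {α : Type} (ops : ∀ b (g : F b), (Fin (arF b g) → α) → α)
    (b : Bool) {V : Type} (ρ : V → α) : Tm (F b) (arF b) V → α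
  | .var v => ρ v
  | .app g ts => ops b g (fun i => evalTm ops b ρ (ts i))

/-- A (set-based) model of the combined theory `𝕋₁ + 𝕋₂`. -/
structure TModel where
  carrier : Type
  ops : ∀ b (g : F b), (Fin (arF b g) → carrier) → carrier
  sat : ∀ b u v, (u, v) ∈ Ax b → ∀ ρ : ℕ → carrier,
      evalTm F arF ops b ρ u = evalTm F arF ops b ρ v

/-- Homomorphisms of models. -/
@[ext]
structure TModelHom (M N : TModel F arF Ax) where
  toFun : M.carrier → N.carrier
  map_ops : ∀ b (g : F b) (args : Fin (arF b g) → M.carrier),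
      toFun (M.ops b g args) = N.ops b g (fun i => toFun (args i))

/-- The identity homomorphism. -/
def TModelHom.id (M : TModel F arF Ax) : TModelHom F arF Ax M M :=
  ⟨fun a => a, fun _ _ _ => rfl⟩

/-- Composition of homomorphisms. -/
def TModelHom.comp {M M' M'' : TModel F arF Ax} (h' : TModelHom F arF Ax M' M'')
    (h : TModelHom F arF Ax M M') : TModelHom F arF Ax M M'' :=
  ⟨fun a => h'.toFun (h.toFun a), fun b g args => by
    simp [h.map_ops, h'.map_ops]⟩

/-- `M` together with the `n` elements `gens` is a free model on `n`
generators: the universal property. -/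
def IsFreeOn (M : TModel F arF Ax) (gens : Fin n → M.carrier) : Prop :=
  ∀ (N : TModel F arF Ax) (a : Fin n → N.carrier),
    ∃! h : TModelHom F arF Ax M N, ∀ i, h.toFun (gens i) = a i

end Models


/-! Renaming the indeterminates by a permutation `π` preserves `≅`, and `interp` commutes with
it. The only non-canonical step of `interp` is the choice of the alien a collapsing term
collapses to; when `𝕋_b` does not prove `x = y`, the class of that alien is unique, because a
term provably equal to a variable must contain it. When `𝕋_b` does prove `x = y`, a
non-collapsing `Σ_b`-rooted term whose aliens do not collapse is a pure `Σ_b`-term, so the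
renaming fixes it. On terms whose only indeterminate is `x`, substituting `xᵢ` for `x` is the
renaming by the transposition `(0 i)`. -/

namespace Tm

variable {S : Type} {ar : S → ℕ} {V W X : Type}

theorem mapVar_mapVar (f : V → W) (g : W → X) :
    ∀ t : Tm S ar V, (t.mapVar f).mapVar g = t.mapVar (g ∘ f)
  | .var _ => rfl
  | .app h ts => congrArg (app h) (funext fun k => mapVar_mapVar f g (ts k))

theorem mapVar_id : ∀ t : Tm S ar V, t.mapVar id = t
  | .var _ => rfl
  | .app h ts => congrArg (app h) (funext fun k => mapVar_id (ts k))

theorem mapVar_eq_bind (g : V → W) :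
    ∀ t : Tm S ar V, t.mapVar g = t.bind (fun v => .var (g v))
  | .var _ => rfl
  | .app h ts => congrArg (app h) (funext fun k => mapVar_eq_bind g (ts k))

theorem bind_bind (σ : V → Tm S ar W) (τ : W → Tm S ar X) :
    ∀ t : Tm S ar V, (t.bind σ).bind τ = t.bind (fun v => (σ v).bind τ)
  | .var _ => rfl
  | .app h ts => congrArg (app h) (funext fun k => bind_bind σ τ (ts k))

theorem mapVar_bind (σ : V → Tm S ar W) (g : W → X) :
    ∀ t : Tm S ar V, (t.bind σ).mapVar g = t.bind (fun v => (σ v).mapVar g)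
  | .var _ => rfl
  | .app h ts => congrArg (app h) (funext fun k => mapVar_bind σ g (ts k))

theorem bind_eq_self {A : Set V} {σ : V → Tm S ar V} (hσ : ∀ v ∈ A, σ v = .var v) :
    ∀ {t : Tm S ar V}, t.VarsIn A → t.bind σ = t
  | .var v, hv => hσ v hv
  | .app h _, hv => congrArg (app h) (funext fun k => bind_eq_self hσ (hv k))

theorem VarsIn.mono {A B : Set V} (hAB : A ⊆ B) :
    ∀ {t : Tm S ar V}, t.VarsIn A → t.VarsIn B
  | .var _, hv => hAB hv
  | .app _ _, hv => fun k => VarsIn.mono hAB (hv k)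

theorem VarsIn.mapVar {A : Set V} (g : V → W) :
    ∀ {t : Tm S ar V}, t.VarsIn A → (t.mapVar g).VarsIn (g '' A)
  | .var v, hv => ⟨v, hv, rfl⟩
  | .app _ _, hv => fun k => VarsIn.mapVar g (hv k)

end Tm

section Congruence

variable {F : Bool → Type} {arF : ∀ b, F b → ℕ}
variable {Ax : ∀ b, Set (Tm (F b) (arF b) ℕ × Tm (F b) (arF b) ℕ)}

theorem AxCong.bind {b : Bool} {V W : Type} (σ : V → Tm (F b) (arF b) W)
    {s t : Tm (F b) (arF b) V} (h : AxCong F arF Ax b s t) :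
    AxCong F arF Ax b (s.bind σ) (t.bind σ) := by
  induction h with
  | refl t => exact .refl _
  | symm _ ih => exact ih.symm
  | trans _ _ ih₁ ih₂ => exact ih₁.trans ih₂
  | congr g _ _ _ ih => exact .congr g _ _ ih
  | ax u v huv τ =>
    rw [Tm.bind_bind, Tm.bind_bind]
    exact .ax u v huv _

theorem AxCong.mapVar {b : Bool} {V W : Type} (g : V → W)
    {s t : Tm (F b) (arF b) V} (h : AxCong F arF Ax b s t) :
    AxCong F arF Ax b (s.mapVar g) (t.mapVar g) := by
  rw [Tm.mapVar_eq_bind, Tm.mapVar_eq_bind]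
  exact h.bind _

variable (Ax) in
def Degenerate (b : Bool) (V : Type) : Prop :=
  ∃ α β : V, α ≠ β ∧ AxCong F arF Ax b (.var α) (.var β)

theorem AxCong.of_degenerate {b : Bool} {V : Type} (h : Degenerate Ax b V)
    (P Q : Tm (F b) (arF b) V) : AxCong F arF Ax b P Q := by
  classical
  obtain ⟨α, β, hne, hαβ⟩ := h
  simpa [Tm.bind, Ne.symm hne] using
    hαβ.bind (fun γ => if γ = α then P else if γ = β then Q else .var γ)

/-- Unless `α` occurs in `P`, renaming `α` to another variable fixes `P` and so makes two
distinct variables provably equal. -/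
theorem AxCong.mem_of_var {b : Bool} {V : Type} [Nontrivial V] (hb : ¬ Degenerate Ax b V)
    {P : Tm (F b) (arF b) V} {A : Set V} (hP : P.VarsIn A) {α : V}
    (h : AxCong F arF Ax b P (.var α)) : α ∈ A := by
  classical
  by_contra hα
  obtain ⟨β, hβ⟩ := exists_ne α
  have hPβ := h.bind (fun γ => if γ = α then .var β else .var γ)
  rw [Tm.bind_eq_self (fun γ hγ => if_neg (ne_of_mem_of_not_mem hγ hα)) hP] at hPβ
  exact hb ⟨α, β, hβ.symm, h.symm.trans (by simpa [Tm.bind] using hPβ)⟩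

end Congruence

section Renaming

variable {F : Bool → Type} {arF : ∀ b, F b → ℕ} {n : ℕ}

def opSig (b : Bool) : Fin 4 := if b then 1 else 0

theorem CSym.sig_op (b : Bool) (g : F b) : (CSym.op (n := n) b g).sig = opSig b := by
  cases b <;> rfl

theorem opSig_ne_two (b : Bool) : opSig b ≠ 2 := by cases b <;> decide
theorem opSig_ne_three (b : Bool) : opSig b ≠ 3 := by cases b <;> decide
theorem opSig_injective : Function.Injective opSig := by decide

def renameInd (σ : ℕ → ℕ) : CT F arF n → CT F arF n
  | .var v => v.elim
  | .app (.op b f) ts => .app (.op b f) (fun k => renameInd σ (ts k))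
  | .app (.gen k) ts => .app (.gen k) ts
  | .app (.ind j) ts => .app (.ind (σ j)) ts

theorem renameInd_renameInd (σ τ : ℕ → ℕ) :
    ∀ t : CT F arF n, renameInd σ (renameInd τ t) = renameInd (σ ∘ τ) t
  | .var v => v.elim
  | .app (.op _ _) ts => congrArg (Tm.app _) (funext fun k => renameInd_renameInd σ τ (ts k))
  | .app (.gen _) _ => rfl
  | .app (.ind _) _ => rfl

theorem renameInd_id : ∀ t : CT F arF n, renameInd id t = t
  | .var v => v.elim
  | .app (.op _ _) ts => congrArg (Tm.app _) (funext fun k => renameInd_id (ts k))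
  | .app (.gen _) _ => rfl
  | .app (.ind _) _ => rfl

theorem sig_rootSym_renameInd (σ : ℕ → ℕ) : ∀ t : CT F arF n,
    (rootSym F arF n (renameInd σ t)).sig = (rootSym F arF n t).sig
  | .var v => v.elim
  | .app (.op _ _) _ => rfl
  | .app (.gen _) _ => rfl
  | .app (.ind _) _ => rfl

theorem rootSym_renameInd_of_eq_op (σ : ℕ → ℕ) {b : Bool} {g : F b} :
    ∀ {t : CT F arF n}, rootSym F arF n t = .op b g → rootSym F arF n (renameInd σ t) = .op b g
  | .var v, _ => v.elim
  | .app (.op _ _) _, h => h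
  | .app (.gen _) _, h => nomatch h
  | .app (.ind _) _, h => nomatch h

theorem renameInd_eq_self_of_inSig (σ : ℕ → ℕ) {P : CSym F n → Prop}
    (hP : ∀ j, ¬ P (.ind j)) :
    ∀ {t : CT F arF n}, InSig F arF n P t → renameInd σ t = t
  | .var v, _ => v.elim
  | .app (.op _ _) _, h =>
    congrArg (Tm.app _) (funext fun k => renameInd_eq_self_of_inSig σ hP (h.2 k))
  | .app (.gen _) _, _ => rfl
  | .app (.ind j) _, h => absurd h.1 (hP j)

theorem substInd_eq_renameInd_swap (i : ℕ) :
    ∀ {t : CT F arF n}, InSig F arF n (SigP F n Set.univ {0}) t →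
      substInd F arF n 0 (xTm F arF n i) t = renameInd (Equiv.swap 0 i) t
  | .var v, _ => v.elim
  | .app (.op _ _) _, h =>
    congrArg (Tm.app _) (funext fun k => substInd_eq_renameInd_swap i (h.2 k))
  | .app (.gen _) _, _ => congrArg (Tm.app _) (funext fun k => Fin.elim0 k)
  | .app (.ind j) _, h => by
    obtain rfl : j = 0 := h.1
    simp only [substInd, renameInd, xTm]
    exact congrArg (Tm.app _) (funext fun k => Fin.elim0 k)

end Renaming

section Layers

variable {F : Bool → Type} {arF : ∀ b, F b → ℕ} {n : ℕ}
variable {Ax : ∀ b, Set (Tm (F b) (arF b) ℕ × Tm (F b) (arF b) ℕ)}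

theorem layerize_op_self (b : Bool) (f : F b) (ts : Fin (arF b f) → CT F arF n) :
    layerize F arF n b (.app (.op b f) ts) = .app f (fun k => layerize F arF n b (ts k)) := by
  cases b <;> rfl

theorem layerize_op_of_ne {b b' : Bool} (h : b' ≠ b) (f : F b')
    (ts : Fin (arF b' f) → CT F arF n) :
    layerize F arF n b (.app (.op b' f) ts) = .var (.app (.op b' f) ts) := by
  cases b <;> cases b' <;> first | rfl | exact absurd rfl h

theorem layerize_of_rootSym_eq_op {b b' : Bool} (hne : b' ≠ b) {t : CT F arF n} {g : F b'}
    (h : rootSym F arF n t = .op b' g) : layerize F arF n b t = .var t := by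
  obtain ⟨v⟩ | ⟨f, ts⟩ := t
  · exact v.elim
  · obtain rfl : f = .op b' g := h
    exact layerize_op_of_ne hne g ts

theorem layerize_renameInd (σ : ℕ → ℕ) (b : Bool) : ∀ t : CT F arF n,
    layerize F arF n b (renameInd σ t) = (layerize F arF n b t).mapVar (renameInd σ)
  | .var v => v.elim
  | .app (.op b' f) ts => by
    rcases eq_or_ne b' b with rfl | hne
    · erw [renameInd, layerize_op_self, layerize_op_self]
      exact congrArg (Tm.app f) (funext fun k => layerize_renameInd σ b' (ts k))
    · erw [renameInd, layerize_op_of_ne hne, layerize_op_of_ne hne]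
      rfl
  | .app (.gen _) _ => rfl
  | .app (.ind _) _ => rfl

theorem iso_renameInd (σ : ℕ → ℕ) {u v : CT F arF n} (h : Iso F arF n Ax u v) :
    Iso F arF n Ax (renameInd σ u) (renameInd σ v) := by
  refine Iso.rec (motive_1 := fun u v _ => Iso F arF n Ax (renameInd σ u) (renameInd σ v))
    (motive_2 := fun b s t _ =>
      LEq F arF n Ax b (s.mapVar (renameInd σ)) (t.mapVar (renameInd σ)))
    ?_ ?_ ?_ ?_ ?_ ?_ ?_ ?_ h
  · rintro b u v ⟨g, hg⟩ ⟨g', hg'⟩ - ih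
    refine .opEq b _ _ ⟨g, rootSym_renameInd_of_eq_op σ hg⟩
      ⟨g', rootSym_renameInd_of_eq_op σ hg'⟩ ?_
    rwa [layerize_renameInd, layerize_renameInd]
  · intro _ ht
    exact .constEq _ (by rwa [sig_rootSym_renameInd])
  · exact fun b t => .refl b _
  · exact fun _ ih => ih.symm
  · exact fun _ _ ih₁ ih₂ => ih₁.trans ih₂
  · exact fun b g _ _ _ ih => .congr b g _ _ ih
  · exact fun b _ _ _ ih => .varRel b _ _ ih
  · intro b u v huv τ
    rw [Tm.mapVar_bind, Tm.mapVar_bind]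
    exact .ax b u v huv _

theorem LEq.axCong_mapVar_mk {b : Bool} {s t : Tm (F b) (arF b) (CT F arF n)}
    (h : LEq F arF n Ax b s t) :
    AxCong F arF Ax b (s.mapVar (Quot.mk (Iso F arF n Ax)))
      (t.mapVar (Quot.mk (Iso F arF n Ax))) := by
  refine LEq.rec (motive_1 := fun _ _ _ => True)
    (motive_2 := fun b s t _ => AxCong F arF Ax b (s.mapVar (Quot.mk (Iso F arF n Ax)))
      (t.mapVar (Quot.mk (Iso F arF n Ax))))
    ?_ ?_ ?_ ?_ ?_ ?_ ?_ ?_ h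
  · exact fun _ _ _ _ _ _ _ => trivial
  · exact fun _ _ => trivial
  · exact fun _ _ => .refl _
  · exact fun _ ih => ih.symm
  · exact fun _ _ ih₁ ih₂ => ih₁.trans ih₂
  · exact fun _ g _ _ _ ih => .congr g _ _ ih
  · intro b s t hst _
    simp only [Tm.mapVar, Quot.sound hst]
    exact .refl _
  · intro b u v huv τ
    rw [Tm.mapVar_bind, Tm.mapVar_bind]
    exact .ax u v huv _

theorem sig_rootSym_eq_of_iso {u v : CT F arF n} (h : Iso F arF n Ax u v) :
    (rootSym F arF n u).sig = (rootSym F arF n v).sig := by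
  cases h with
  | opEq b u v hu hv _ =>
    obtain ⟨g, hg⟩ := hu
    obtain ⟨g', hg'⟩ := hv
    rw [hg, hg', CSym.sig_op, CSym.sig_op]
  | constEq t _ => rfl

theorem sig_rootSym_eq_of_mk_eq {u v : CT F arF n}
    (h : Quot.mk (Iso F arF n Ax) u = Quot.mk (Iso F arF n Ax) v) :
    (rootSym F arF n u).sig = (rootSym F arF n v).sig :=
  congrArg (Quot.lift (fun u => (rootSym F arF n u).sig) fun _ _ => sig_rootSym_eq_of_iso) h

theorem sig_rootSym_out_eq {q : Alg F arF n Ax} {w : CT F arF n}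
    (h : q = Quot.mk (Iso F arF n Ax) w) :
    (rootSym F arF n q.out).sig = (rootSym F arF n w).sig :=
  sig_rootSym_eq_of_mk_eq (by rw [Quot.out_eq, h])

theorem leq_layerize_of_iso (b : Bool) {u v : CT F arF n} (h : Iso F arF n Ax u v) :
    LEq F arF n Ax b (layerize F arF n b u) (layerize F arF n b v) := by
  cases h with
  | opEq b' u v hu hv hl =>
    rcases eq_or_ne b' b with rfl | hne
    · exact hl
    · obtain ⟨g, hg⟩ := hu
      obtain ⟨g', hg'⟩ := hv
      rw [layerize_of_rootSym_eq_op hne hg, layerize_of_rootSym_eq_op hne hg']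
      exact .varRel b u v (.opEq b' u v ⟨g, hg⟩ ⟨g', hg'⟩ hl)
  | constEq t _ => exact .refl b _

theorem leq_layerize_of_mk_eq (b : Bool) {u v : CT F arF n}
    (h : Quot.mk (Iso F arF n Ax) u = Quot.mk (Iso F arF n Ax) v) :
    LEq F arF n Ax b (layerize F arF n b u) (layerize F arF n b v) := by
  replace h := Quot.eq.mp h
  induction h with
  | rel _ _ h => exact leq_layerize_of_iso b h
  | refl => exact .refl b _
  | symm _ _ _ ih => exact ih.symm
  | trans _ _ _ _ _ ih₁ ih₂ => exact ih₁.trans ih₂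

theorem axCong_absQ_of_mk_eq (b : Bool) {u v : CT F arF n}
    (h : Quot.mk (Iso F arF n Ax) u = Quot.mk (Iso F arF n Ax) v) :
    AxCong F arF Ax b (absQ F arF n Ax b u) (absQ F arF n Ax b v) :=
  (leq_layerize_of_mk_eq b h).axCong_mapVar_mk

theorem mk_op_congr {b : Bool} {g : F b} {us vs : Fin (arF b g) → CT F arF n}
    (h : ∀ j, Quot.mk (Iso F arF n Ax) (us j) = Quot.mk (Iso F arF n Ax) (vs j)) :
    Quot.mk (Iso F arF n Ax) (.app (.op b g) us) =
      Quot.mk (Iso F arF n Ax) (.app (.op b g) vs) := by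
  refine Quot.sound (.opEq b _ _ ⟨g, rfl⟩ ⟨g, rfl⟩ ?_)
  rw [layerize_op_self, layerize_op_self]
  exact .congr b g _ _ fun j => leq_layerize_of_mk_eq b (h j)

instance : Nontrivial (Alg F arF n Ax) := by
  refine ⟨⟨Quot.mk _ (xTm F arF n 1), Quot.mk _ (xTm F arF n 2), fun h => ?_⟩⟩
  have hiso : ∀ u v, Iso F arF n Ax u v →
      (rootSym F arF n u = .ind 1 ↔ rootSym F arF n v = .ind 1) := by
    rintro _ _ (⟨b, u, v, ⟨g, hg⟩, ⟨g', hg'⟩, -⟩ | ⟨t, -⟩)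
    · simp [hg, hg']
    · rfl
  have hx := congrArg (Quot.lift (fun u => rootSym F arF n u = .ind 1)
    fun u v h => propext (hiso u v h)) h
  have h21 : rootSym F arF n (xTm F arF n 2) = .ind 1 := cast hx rfl
  simp [xTm, rootSym] at h21

end Layers

section Interpretation

variable {F : Bool → Type} {arF : ∀ b, F b → ℕ} {n : ℕ}
variable {Ax : ∀ b, Set (Tm (F b) (arF b) ℕ × Tm (F b) (arF b) ℕ)}

def Alg.renameInd (σ : ℕ → ℕ) : Alg F arF n Ax → Alg F arF n Ax :=
  Quot.map (_root_.renameInd σ) fun _ _ => iso_renameInd σ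

theorem Alg.renameInd_mk (σ : ℕ → ℕ) (u : CT F arF n) :
    Alg.renameInd σ (Quot.mk (Iso F arF n Ax) u) = Quot.mk _ (_root_.renameInd σ u) := rfl

theorem Alg.renameInd_symm_renameInd (π : Equiv.Perm ℕ) (q : Alg F arF n Ax) :
    Alg.renameInd π.symm (Alg.renameInd π q) = q := by
  induction q using Quot.ind with
  | mk u => rw [Alg.renameInd_mk, Alg.renameInd_mk, renameInd_renameInd,
      Equiv.symm_comp_self, renameInd_id]

theorem absQ_renameInd (σ : ℕ → ℕ) (b : Bool) (t : CT F arF n) :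
    absQ F arF n Ax b (renameInd σ t) = (absQ F arF n Ax b t).mapVar (Alg.renameInd σ) := by
  rw [absQ, absQ, layerize_renameInd, Tm.mapVar_mapVar, Tm.mapVar_mapVar]
  rfl

theorem sig_rootSym_ne_of_mem_aliensUnder {k : Fin 4} : ∀ {t u : CT F arF n},
    u ∈ aliensUnder F arF n k t → (rootSym F arF n u).sig ≠ k
  | .var v, _, _ => v.elim
  | .app f ts, u, h => by
    by_cases hf : f.sig = k
    · rw [aliensUnder, if_pos hf] at h
      obtain ⟨j, hj⟩ := Set.mem_iUnion.mp h
      exact sig_rootSym_ne_of_mem_aliensUnder hj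
    · rw [aliensUnder, if_neg hf] at h
      rcases h with rfl
      exact hf

theorem aliensUnder_of_sig_ne {k : Fin 4} : ∀ {u : CT F arF n},
    (rootSym F arF n u).sig ≠ k → aliensUnder F arF n k u = {u}
  | .var v, _ => v.elim
  | .app _ _, h => if_neg h

theorem aliensUnder_op_self (b : Bool) (g : F b) (ts : Fin (arF b g) → CT F arF n) :
    aliensUnder F arF n (opSig b) (.app (.op b g) ts) =
      ⋃ j, aliensUnder F arF n (opSig b) (ts j) :=
  if_pos (CSym.sig_op b g)

theorem varsIn_layerize (b : Bool) : ∀ t : CT F arF n,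
    (layerize F arF n b t).VarsIn (aliensUnder F arF n (opSig b) t)
  | .var v => v.elim
  | .app (.op b' f) ts => by
    rcases eq_or_ne b' b with rfl | hne
    · erw [layerize_op_self]
      intro j
      refine (varsIn_layerize b' (ts j)).mono fun u hu => ?_
      erw [aliensUnder_op_self]
      exact Set.mem_iUnion.mpr ⟨j, hu⟩
    · erw [layerize_op_of_ne hne]
      show _ ∈ aliensUnder F arF n (opSig b) (.app (.op b' f) ts)
      rw [aliensUnder_of_sig_ne (by simpa [rootSym, CSym.sig_op] using opSig_injective.ne hne)]
      rfl
  | .app (.gen _) _ => by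
    show _ ∈ aliensUnder F arF n (opSig b) _
    rw [aliensUnder_of_sig_ne fun h => opSig_ne_two b h.symm]
    rfl
  | .app (.ind _) _ => by
    show _ ∈ aliensUnder F arF n (opSig b) _
    rw [aliensUnder_of_sig_ne fun h => opSig_ne_three b h.symm]
    rfl

theorem aliensSet_op (b : Bool) (g : F b) (ts : Fin (arF b g) → CT F arF n) :
    aliensSet F arF n (.app (.op b g) ts) = ⋃ j, aliensUnder F arF n (opSig b) (ts j) := by
  show (⋃ j, aliensUnder F arF n (CSym.op b g).sig (ts j)) = _
  rw [CSym.sig_op]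

theorem varsIn_absQ_op (b : Bool) (g : F b) (ts : Fin (arF b g) → CT F arF n) :
    (absQ F arF n Ax b (.app (.op b g) ts)).VarsIn
      (Quot.mk (Iso F arF n Ax) '' aliensSet F arF n (.app (.op b g) ts)) := by
  refine Tm.VarsIn.mapVar _ ((varsIn_layerize b _).mono fun u hu => ?_)
  rwa [aliensUnder_op_self, ← aliensSet_op] at hu

variable (Ax) in
/-- The term `t'` in the definition of `interp`. -/
noncomputable def reprApp (b : Bool) (g : F b) (ts : Fin (arF b g) → CT F arF n) : CT F arF n :=
  .app (.op b g) fun j => (interp F arF n Ax (ts j)).out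

variable (Ax) in
def Collapses (b : Bool) (g : F b) (ts : Fin (arF b g) → CT F arF n) : Prop :=
  ∃ u, u ∈ aliensSet F arF n (reprApp Ax b g ts) ∧
    AxCong F arF Ax b (absQ F arF n Ax b (reprApp Ax b g ts)) (.var (Quot.mk (Iso F arF n Ax) u))

theorem interp_op_of_collapses {b : Bool} {g : F b} {ts : Fin (arF b g) → CT F arF n}
    (h : Collapses Ax b g ts) :
    interp F arF n Ax (.app (.op b g) ts) = Quot.mk (Iso F arF n Ax) h.choose := by
  rw [interp.eq_def]
  exact dif_pos h

theorem interp_op_of_not_collapses {b : Bool} {g : F b} {ts : Fin (arF b g) → CT F arF n}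
    (h : ¬ Collapses Ax b g ts) :
    interp F arF n Ax (.app (.op b g) ts) = Quot.mk (Iso F arF n Ax) (reprApp Ax b g ts) := by
  rw [interp.eq_def]
  exact dif_neg h

theorem interp_app_of_ne_op {f : CSym F n} (hf : ∀ b g, f ≠ .op b g)
    (ts : Fin (CSym.arity arF f) → CT F arF n) :
    interp F arF n Ax (.app f ts) = Quot.mk (Iso F arF n Ax) (.app f ts) := by
  cases f with
  | op b g => exact absurd rfl (hf b g)
  | gen _ => rw [interp]; rintro _ _ _ ⟨⟩
  | ind _ => rw [interp]; rintro _ _ _ ⟨⟩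

theorem sig_rootSym_out_interp_op_of_collapses {b : Bool} {g : F b}
    {ts : Fin (arF b g) → CT F arF n} (h : Collapses Ax b g ts) :
    (rootSym F arF n (interp F arF n Ax (.app (.op b g) ts)).out).sig ≠ opSig b := by
  rw [sig_rootSym_out_eq (interp_op_of_collapses h)]
  have hu : h.choose ∈ ⋃ j, aliensUnder F arF n (opSig b) (interp F arF n Ax (ts j)).out :=
    aliensSet_op b g _ ▸ h.choose_spec.1
  obtain ⟨j, hj⟩ := Set.mem_iUnion.mp hu
  exact sig_rootSym_ne_of_mem_aliensUnder hj

theorem interp_op_of_axCong_var {b : Bool} {g : F b} {ts : Fin (arF b g) → CT F arF n}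
    (hb : ¬ Degenerate Ax b (Alg F arF n Ax)) {α : Alg F arF n Ax}
    (h : AxCong F arF Ax b (absQ F arF n Ax b (reprApp Ax b g ts)) (.var α)) :
    interp F arF n Ax (.app (.op b g) ts) = α := by
  obtain ⟨u, hu, rfl⟩ := h.mem_of_var hb (varsIn_absQ_op b g _)
  have hc : Collapses Ax b g ts := ⟨u, hu, h⟩
  rw [interp_op_of_collapses hc]
  by_contra hne
  exact hb ⟨_, _, hne, hc.choose_spec.2.symm.trans h⟩

theorem interp_op_of_forall_not_axCong_var {b : Bool} {g : F b}
    {ts : Fin (arF b g) → CT F arF n}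
    (h : ∀ α, ¬ AxCong F arF Ax b (absQ F arF n Ax b (reprApp Ax b g ts)) (.var α)) :
    interp F arF n Ax (.app (.op b g) ts) = Quot.mk (Iso F arF n Ax) (reprApp Ax b g ts) :=
  interp_op_of_not_collapses fun ⟨_, _, hu⟩ => h _ hu

end Interpretation

section Equivariance

variable {F : Bool → Type} {arF : ∀ b, F b → ℕ} {n : ℕ}
variable {Ax : ∀ b, Set (Tm (F b) (arF b) ℕ × Tm (F b) (arF b) ℕ)}

theorem allAliensSet_child_subset (f : CSym F n) (ts : Fin (CSym.arity arF f) → CT F arF n)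
    (j : Fin (CSym.arity arF f)) :
    allAliensSet F arF n (ts j) ⊆ allAliensSet F arF n (.app f ts) :=
  fun _ hu => Set.mem_iUnion.mpr ⟨j, Or.inr hu⟩

theorem child_mem_allAliensSet (f : CSym F n) (ts : Fin (CSym.arity arF f) → CT F arF n)
    (j : Fin (CSym.arity arF f)) (h : (rootSym F arF n (ts j)).sig ≠ f.sig) :
    ts j ∈ allAliensSet F arF n (.app f ts) :=
  Set.mem_iUnion.mpr ⟨j, Or.inl (by rw [if_neg h]; rfl)⟩

theorem allAliensSet_subset_of_mem : ∀ {t u : CT F arF n}, u ∈ allAliensSet F arF n t →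
    allAliensSet F arF n u ⊆ allAliensSet F arF n t
  | .var v, _, _ => v.elim
  | .app f ts, u, h => by
    obtain ⟨j, hj | hj⟩ := Set.mem_iUnion.mp h
    · split_ifs at hj
      · exact hj.elim
      · rcases hj with rfl
        exact allAliensSet_child_subset f ts j
    · exact (allAliensSet_subset_of_mem hj).trans (allAliensSet_child_subset f ts j)

theorem allAliensSet_renameInd (σ : ℕ → ℕ) : ∀ t : CT F arF n,
    allAliensSet F arF n (renameInd σ t) = renameInd σ '' allAliensSet F arF n t
  | .var v => v.elim
  | .app (.op b f) ts => by
    show (⋃ j, _) = renameInd σ '' ⋃ j, _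
    rw [Set.image_iUnion]
    refine Set.iUnion_congr fun j => ?_
    rw [Set.image_union, allAliensSet_renameInd σ (ts j), sig_rootSym_renameInd]
    split_ifs <;> simp
  | .app (.gen _) _ | .app (.ind _) _ => by
    ext u
    simp only [renameInd, allAliensSet, Set.mem_iUnion, Set.mem_image]
    exact ⟨fun ⟨j, _⟩ => j.elim0, fun ⟨_, ⟨j, _⟩, _⟩ => j.elim0⟩

variable (Ax) in
def NonCollapsing (t : CT F arF n) : Prop :=
  interp F arF n Ax t = Quot.mk (Iso F arF n Ax) t

variable (Ax) in
def AliensNonCollapsing (t : CT F arF n) : Prop :=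
  ∀ u ∈ allAliensSet F arF n t, NonCollapsing Ax u

theorem AliensNonCollapsing.child {f : CSym F n} {ts : Fin (CSym.arity arF f) → CT F arF n}
    (h : AliensNonCollapsing Ax (.app f ts)) (j : Fin (CSym.arity arF f)) :
    AliensNonCollapsing Ax (ts j) :=
  fun u hu => h u (allAliensSet_child_subset f ts j hu)

theorem sig_rootSym_out_interp_of_not_collapses {b : Bool} {g : F b}
    {ts : Fin (arF b g) → CT F arF n} (hdeg : Degenerate Ax b (Alg F arF n Ax))
    (hc : ¬ Collapses Ax b g ts) (j : Fin (arF b g)) :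
    (rootSym F arF n (interp F arF n Ax (ts j)).out).sig = opSig b := by
  by_contra hne
  have hmem : (interp F arF n Ax (ts j)).out ∈ aliensSet F arF n (reprApp Ax b g ts) :=
    (aliensSet_op b g _).symm ▸ Set.mem_iUnion.mpr ⟨j, by rw [aliensUnder_of_sig_ne hne]; rfl⟩
  exact hc ⟨_, hmem, .of_degenerate hdeg _ _⟩

/-- In a degenerate `𝕋_b` every alien abstraction is provably equal to every variable, so a
`Σ_b`-rooted term that does not collapse has no aliens left once its arguments are interpreted. -/
theorem inSig_of_degenerate {b : Bool} (hdeg : Degenerate Ax b (Alg F arF n Ax)) :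
    ∀ {t : CT F arF n}, AliensNonCollapsing Ax t → (rootSym F arF n t).sig = opSig b →
      (rootSym F arF n (interp F arF n Ax t).out).sig = opSig b →
      InSig F arF n (fun f => f.sig = opSig b) t
  | .var v, _, _, _ => v.elim
  | .app (.gen _) _, _, hroot, _ => absurd hroot.symm (opSig_ne_two b)
  | .app (.ind _) _, _, hroot, _ => absurd hroot.symm (opSig_ne_three b)
  | .app (.op b' g) ts, hal, hroot, hout => by
    obtain rfl : b' = b := opSig_injective ((CSym.sig_op b' g).symm.trans hroot)
    have hc : ¬ Collapses Ax b' g ts := fun hc => sig_rootSym_out_interp_op_of_collapses hc hout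
    have hout_child := sig_rootSym_out_interp_of_not_collapses hdeg hc
    refine ⟨CSym.sig_op b' g, fun j => ?_⟩
    have hroot_child : (rootSym F arF n (ts j)).sig = opSig b' := by
      by_contra hne
      have hnc : NonCollapsing Ax (ts j) :=
        hal _ (child_mem_allAliensSet _ ts j (by rwa [CSym.sig_op]))
      exact hne (sig_rootSym_out_eq hnc ▸ hout_child j)
    exact inSig_of_degenerate hdeg (hal.child j) hroot_child (hout_child j)

theorem renameInd_eq_self_of_degenerate (σ : ℕ → ℕ) {t : CT F arF n}
    (hnc : NonCollapsing Ax t) (hal : AliensNonCollapsing Ax t) {b : Bool} {g : F b}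
    (hroot : rootSym F arF n t = .op b g) (hdeg : Degenerate Ax b (Alg F arF n Ax)) :
    renameInd σ t = t := by
  refine renameInd_eq_self_of_inSig σ (fun _ h => opSig_ne_three b h.symm)
    (inSig_of_degenerate hdeg hal ?_ ?_)
  · rw [hroot, CSym.sig_op]
  · rw [sig_rootSym_out_eq hnc, hroot, CSym.sig_op]

theorem interp_renameInd_op (π : Equiv.Perm ℕ) {b : Bool} {g : F b}
    {ts : Fin (arF b g) → CT F arF n} (hb : ¬ Degenerate Ax b (Alg F arF n Ax))
    (hts : ∀ j, interp F arF n Ax (renameInd π (ts j)) =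
      Alg.renameInd π (interp F arF n Ax (ts j))) :
    interp F arF n Ax (renameInd π (.app (.op b g) ts)) =
      Alg.renameInd π (interp F arF n Ax (.app (.op b g) ts)) := by
  have hrepr : Quot.mk (Iso F arF n Ax) (reprApp Ax b g fun j => renameInd π (ts j)) =
      Alg.renameInd π (Quot.mk _ (reprApp Ax b g ts)) :=
    mk_op_congr fun j => by rw [Quot.out_eq, hts j, ← Alg.renameInd_mk, Quot.out_eq]
  have habs : AxCong F arF Ax b (absQ F arF n Ax b (reprApp Ax b g fun j => renameInd π (ts j)))
      ((absQ F arF n Ax b (reprApp Ax b g ts)).mapVar (Alg.renameInd π)) := by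
    rw [← absQ_renameInd]
    exact axCong_absQ_of_mk_eq b hrepr
  show interp F arF n Ax (.app (.op b g) fun j => renameInd π (ts j)) = _
  by_cases h : ∃ α, AxCong F arF Ax b (absQ F arF n Ax b (reprApp Ax b g ts)) (.var α)
  · obtain ⟨α, hα⟩ := h
    rw [interp_op_of_axCong_var hb hα]
    exact interp_op_of_axCong_var hb (habs.trans (hα.mapVar _))
  · push Not at h
    rw [interp_op_of_forall_not_axCong_var h, ← hrepr]
    refine interp_op_of_forall_not_axCong_var fun β hβ => h (Alg.renameInd π.symm β) ?_
    have hinv : Alg.renameInd π.symm ∘ Alg.renameInd π = (id : Alg F arF n Ax → _) :=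
      funext (Alg.renameInd_symm_renameInd π)
    simpa only [Tm.mapVar_mapVar, hinv, Tm.mapVar_id, Tm.mapVar] using
      (habs.symm.trans hβ).mapVar (Alg.renameInd π.symm)

theorem interp_renameInd (π : Equiv.Perm ℕ) : ∀ {t : CT F arF n}, AliensNonCollapsing Ax t →
    (∀ b g, rootSym F arF n t = .op b g → ¬ Degenerate Ax b (Alg F arF n Ax)) →
    interp F arF n Ax (renameInd π t) = Alg.renameInd π (interp F arF n Ax t)
  | .var v, _, _ => v.elim
  | .app (.gen _) _, _, _ | .app (.ind _) _, _, _ => by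
    rw [interp_app_of_ne_op (by rintro _ _ ⟨⟩)]
    exact interp_app_of_ne_op (by rintro _ _ ⟨⟩) _
  | .app (.op b g) ts, hal, hnd => interp_renameInd_op π (hnd b g rfl) fun j => by
    by_cases hdeg :
        ∃ b' g', rootSym F arF n (ts j) = .op b' g' ∧ Degenerate Ax b' (Alg F arF n Ax)
    · obtain ⟨b', g', hroot, hb'⟩ := hdeg
      have hne : (rootSym F arF n (ts j)).sig ≠ (CSym.op (n := n) b g).sig := by
        rw [hroot, CSym.sig_op, CSym.sig_op]
        exact opSig_injective.ne fun h => hnd b g rfl (h ▸ hb')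
      have hnc : NonCollapsing Ax (ts j) := hal _ (child_mem_allAliensSet _ ts j hne)
      have hfix := renameInd_eq_self_of_degenerate π hnc (hal.child j) hroot hb'
      rw [hfix, hnc, Alg.renameInd_mk, hfix]
    · push Not at hdeg
      exact interp_renameInd π (hal.child j) hdeg

theorem NonCollapsing.renameInd (π : Equiv.Perm ℕ) {t : CT F arF n} (hnc : NonCollapsing Ax t)
    (hal : AliensNonCollapsing Ax t) : NonCollapsing Ax (renameInd π t) := by
  by_cases hdeg : ∃ b g, rootSym F arF n t = .op b g ∧ Degenerate Ax b (Alg F arF n Ax)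
  · obtain ⟨b, g, hroot, hb⟩ := hdeg
    rw [renameInd_eq_self_of_degenerate π hnc hal hroot hb]
    exact hnc
  · push Not at hdeg
    rw [NonCollapsing, interp_renameInd π hal hdeg, hnc]
    rfl

end Equivariance

section Statement
variable (F : Bool → Type) (arF : ∀ b, F b → ℕ) (n : ℕ)
variable (Ax : ∀ b, Set (Tm (F b) (arF b) ℕ × Tm (F b) (arF b) ℕ))

/-- Non-collapsing is preserved under renaming the indeterminate: if
`t^𝒜 = [t]_≅` and likewise for all alien subterms of `t` at arbitrary depth,
then the same holds for `t(xᵢ) = t[xᵢ/x]`. -/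
theorem noncollapsing_rename (t : CT F arF n)
    (ht : InSig F arF n (SigP F n Set.univ {0}) t)
    (h1 : interp F arF n Ax t = Quot.mk (Iso F arF n Ax) t)
    (h2 : ∀ u ∈ allAliensSet F arF n t,
      interp F arF n Ax u = Quot.mk (Iso F arF n Ax) u)
    (i : ℕ) (hi : 1 ≤ i) :
    interp F arF n Ax (substInd F arF n 0 (xTm F arF n i) t) =
        Quot.mk (Iso F arF n Ax) (substInd F arF n 0 (xTm F arF n i) t) ∧
      ∀ v ∈ allAliensSet F arF n (substInd F arF n 0 (xTm F arF n i) t),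
        interp F arF n Ax v = Quot.mk (Iso F arF n Ax) v := by
  rw [substInd_eq_renameInd_swap i ht]
  refine ⟨NonCollapsing.renameInd _ h1 h2, ?_⟩
  intro v hv
  rw [allAliensSet_renameInd] at hv
  obtain ⟨u, hu, rfl⟩ := hv
  exact NonCollapsing.renameInd _ (h2 u hu) fun w hw => h2 w (allAliensSet_subset_of_mem hu hw)
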